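/- arXiv:0804.3074 — 3 statements merged into one kernel-verified Lean document; each statement's English description precedes it below -/
import Mathlib

section
/- For an integer q ≥ 2, a partition μ with parts restricted to the set {q^k - q^{k-i} : i = 1,...,k} is q-compatible with at most one partition λ having at most k nonzero parts. (Here μ is q-compatible with λ if for each i the multiplicity of the part q^k - q^{k-i} in μ lies in the interval [δ_i(λ), δ_i(λ) + q^{λ_i}), where δ_i(λ) := Σ_{j=λ_{i+1}}^{λ_i-1} q^j with λ_{k+1} := 0.) -/
noncomputable section

/-- `λ_{i+1}` for a partition encoded by `lam : Fin k → ℕ` (with `λ_{k+1} = 0`). -/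
def nextPart {k : ℕ} (lam : Fin k → ℕ) (i : Fin k) : ℕ :=
  if h : (i : ℕ) + 1 < k then lam ⟨(i : ℕ) + 1, h⟩ else 0

/-- `δ_i(λ) := Σ_{j=λ_{i+1}}^{λ_i - 1} q^j`. -/
def deltaStat (q : ℕ) {k : ℕ} (lam : Fin k → ℕ) (i : Fin k) : ℕ :=
  ∑ j ∈ Finset.Ico (nextPart lam i) (lam i), q ^ j

open Finset

section SumIco

variable {M : Type*} [AddCommMonoid M] [PartialOrder M] [CanonicallyOrderedAdd M]

theorem sum_Ico_add_le_sum_Ico (f : ℕ → M) {b a a' : ℕ} (hba : b ≤ a) (haa' : a < a') :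
    ∑ j ∈ Ico b a, f j + f a ≤ ∑ j ∈ Ico b a', f j := by
  rw [← sum_Ico_succ_top hba]
  exact sum_le_sum_of_subset (Ico_subset_Ico le_rfl haa')

theorem eq_of_mem_Ico_sum_Ico (f : ℕ → M) {b a a' : ℕ} {x : M} (hba : b ≤ a) (hba' : b ≤ a')
    (h : ∑ j ∈ Ico b a, f j ≤ x ∧ x < ∑ j ∈ Ico b a, f j + f a)
    (h' : ∑ j ∈ Ico b a', f j ≤ x ∧ x < ∑ j ∈ Ico b a', f j + f a') : a = a' := by
  rcases lt_trichotomy a a' with hlt | heq | hgt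
  · exact absurd (h.2.trans_le ((sum_Ico_add_le_sum_Ico f hba hlt).trans h'.1)) (lt_irrefl x)
  · exact heq
  · exact absurd (h'.2.trans_le ((sum_Ico_add_le_sum_Ico f hba' hgt).trans h.1)) (lt_irrefl x)

end SumIco

theorem nextPart_le {k : ℕ} {lam : Fin k → ℕ} (hlam : Antitone lam) (i : Fin k) :
    nextPart lam i ≤ lam i := by
  unfold nextPart
  split_ifs
  · exact hlam (Fin.le_def.2 (Nat.le_succ _))
  · exact Nat.zero_le _

/-- The windows `[Σ_{b ≤ j < a} q^j, Σ_{b ≤ j ≤ a} q^j)` for distinct `a ≥ b` are disjoint, so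
`m i` determines `λ_i` once `λ_{i+1}` is known; induct downwards from the last part. -/
theorem q_compatible_unique_general (q k : ℕ) (m lam lam' : Fin k → ℕ)
    (hlam : Antitone lam) (hlam' : Antitone lam')
    (h : ∀ i, deltaStat q lam i ≤ m i ∧ m i < deltaStat q lam i + q ^ lam i)
    (h' : ∀ i, deltaStat q lam' i ≤ m i ∧ m i < deltaStat q lam' i + q ^ lam' i) :
    lam = lam' := by
  funext i
  induction i using WellFoundedGT.induction with
  | _ i ih =>
  have hnext : nextPart lam i = nextPart lam' i := by
    unfold nextPart
    split_ifs
    · exact ih _ (Fin.lt_def.2 (Nat.lt_succ_self _))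
    · rfl
  have hi := h i
  have hb := nextPart_le hlam i
  unfold deltaStat at hi h'
  rw [hnext] at hi hb
  exact eq_of_mem_Ico_sum_Ico (q ^ ·) hb (nextPart_le hlam' i) hi (h' i)

/-- For `q ≥ 2`, a partition `μ` with parts restricted to `{q^k - q^{k-i} : i = 1,…,k}`
(encoded by its multiplicity function `m`, where `m i` is the multiplicity of the part
`q^k - q^{k-i}`) is q-compatible with at most one partition `λ` with at most `k` nonzero
parts: if `δ_i(λ) ≤ m i < δ_i(λ) + q^{λ_i}` for all `i`, and likewise for `λ'`, then `λ = λ'`. -/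
theorem q_compatible_unique (q k : ℕ) (hq : 2 ≤ q) (m lam lam' : Fin k → ℕ)
    (hlam : Antitone lam) (hlam' : Antitone lam')
    (h : ∀ i, deltaStat q lam i ≤ m i ∧ m i < deltaStat q lam i + q ^ lam i)
    (h' : ∀ i, deltaStat q lam' i ≤ m i ∧ m i < deltaStat q lam' i + q ^ lam' i) :
    lam = lam' :=
  q_compatible_unique_general q k m lam lam' hlam hlam' h h'
end
end

section
/- For any composition α = (α_1,...,α_ℓ) of n, the (q,t)-multinomial coefficient factors as [n choose α]_{q,t} = [n choose α_1]_{q,t} · φ^{α_1}([n - α_1 choose (α_2,...,α_ℓ)]_{q,t}), where φ is the substitution t ↦ t^q. Consequently, for integers q ≥ 2 it is a polynomial in t with nonnegative coefficients. -/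
/-!
Splitting the numerator of `[n choose α]_{q,t}` after its first `α₁` factors and the denominator
after its first block, every remaining exponent has the form
`q^{α₁+m} - q^{α₁+j} = q^{α₁}(q^m - q^j)`, so what remains is `φ^{α₁}` applied to
`[n - α₁ choose (α₂,…,α_ℓ)]_{q,t}`.

By this factorization, positivity of the multinomials reduces to that of the binomials, which
follows by induction on `n` from the Pascal-type recursion
`[n+1 choose j+1](t) = [n choose j](t^q) + t^{q^{j+1}-1} [n choose j+1](t^q) ∏_{i ≤ j} [q]_{x_i}`
with `x_i = t^{q^{j+1}-q^i}` and `[q]_x = 1 + x + ⋯ + x^{q-1}`: its right-hand side is built from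
`t` by sums and products only. The recursion needs only that the denominators `1 - t^m`, `m > 0`,
do not vanish, i.e. that `t` is not of finite order; so the induction runs in any subsemiring of
`ℚ(X)`, here the image of the polynomials with nonnegative coefficients.
-/

noncomputable section

/-- The inclusive partial sum `σ_s = α_1 + … + α_s`. -/
def sigTo {l : ℕ} (α : Fin l → ℕ) (s : Fin l) : ℕ :=
  ∑ s' ∈ Finset.univ.filter (fun s' => s' ≤ s), α s'

/-- The (q,t)-multinomial coefficient
`[n choose α]_{q,t} = ∏_{i=1}^{n}(1 - t^{q^n - q^{n-i}}) / ∏_s ∏_{i=1}^{α_s}(1 - t^{q^{σ_s} - q^{σ_s - i}})`,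
where `n = Σ α_s`, as a function of `t`. -/
def qtmulti (q : ℕ) {l : ℕ} (α : Fin l → ℕ) (t : RatFunc ℚ) : RatFunc ℚ :=
  (∏ i ∈ Finset.range (∑ s, α s),
      (1 - t ^ (q ^ (∑ s, α s) - q ^ ((∑ s, α s) - 1 - i))))
    / ∏ s : Fin l, ∏ i ∈ Finset.range (α s),
        (1 - t ^ (q ^ sigTo α s - q ^ (sigTo α s - 1 - i)))

/-- The (q,t)-binomial `[n choose k]_{q,t}` in product form. -/
def qtbin (q n k : ℕ) (t : RatFunc ℚ) : RatFunc ℚ :=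
  ∏ i ∈ Finset.range k, (1 - t ^ (q ^ n - q ^ i)) / (1 - t ^ (q ^ k - q ^ i))

open Finset Polynomial

namespace Polynomial

variable (R : Type*) [Semiring R] [PartialOrder R] [IsOrderedRing R]

def nonnegCoeffs : Subsemiring R[X] where
  carrier := {p | ∀ i, 0 ≤ p.coeff i}
  mul_mem' {p r} hp hr i := by
    rw [coeff_mul]
    exact sum_nonneg fun x _ => mul_nonneg (hp _) (hr _)
  one_mem' i := by
    rw [coeff_one]
    split_ifs <;> simp
  add_mem' {p r} hp hr i := by
    rw [coeff_add]
    exact add_nonneg (hp i) (hr i)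
  zero_mem' _ := le_rfl

theorem X_mem_nonnegCoeffs : X ∈ nonnegCoeffs R := fun i => by
  rw [coeff_X]
  split_ifs <;> simp

end Polynomial

theorem RatFunc.not_isOfFinOrder_X {K : Type*} [Field K] :
    ¬IsOfFinOrder (RatFunc.X : RatFunc K) := by
  intro h
  obtain ⟨n, hn, hXn⟩ := isOfFinOrder_iff_pow_eq_one.1 h
  exact transcendental_X (IsAlgebraic.of_pow hn (hXn ▸ isAlgebraic_one))

theorem not_isOfFinOrder_pow {M : Type*} [Monoid M] {x : M} (hx : ¬IsOfFinOrder x) {n : ℕ}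
    (hn : n ≠ 0) : ¬IsOfFinOrder (x ^ n) :=
  fun h => hx (h.of_pow hn)

theorem one_sub_pow_ne_zero_of_not_isOfFinOrder {R : Type*} [Ring R] {x : R}
    (hx : ¬IsOfFinOrder x) {m : ℕ} (hm : m ≠ 0) : 1 - x ^ m ≠ 0 :=
  sub_ne_zero.2 fun h => hx (isOfFinOrder_iff_pow_eq_one.2 ⟨m, Nat.pos_of_ne_zero hm, h.symm⟩)

theorem pow_pow_sub_pow {M : Type*} [Monoid M] (x : M) (q a b c : ℕ) :
    (x ^ q ^ a) ^ (q ^ b - q ^ c) = x ^ (q ^ (a + b) - q ^ (a + c)) := by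
  rw [← pow_mul, Nat.mul_sub, ← pow_add, ← pow_add]

theorem pow_pow_sub_pow' {M : Type*} [Monoid M] (x : M) (q b c : ℕ) :
    (x ^ q) ^ (q ^ b - q ^ c) = x ^ (q ^ (b + 1) - q ^ (c + 1)) := by
  simpa [add_comm] using pow_pow_sub_pow x q 1 b c

theorem sigTo_zero {l : ℕ} (α : Fin (l + 1) → ℕ) : sigTo α 0 = α 0 := by
  simp [sigTo, filter_eq']

theorem sigTo_succ {l : ℕ} (α : Fin (l + 1) → ℕ) (s : Fin l) :
    sigTo α s.succ = α 0 + sigTo (Fin.tail α) s := by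
  rw [sigTo, sigTo, sum_filter, sum_filter, Fin.sum_univ_succ]
  simp [Fin.succ_le_succ_iff, Fin.tail]

theorem self_le_sigTo {l : ℕ} (α : Fin l → ℕ) (s : Fin l) : α s ≤ sigTo α s :=
  single_le_sum (fun i _ => Nat.zero_le (α i)) (by simp)

def qtProd (q n k : ℕ) (t : RatFunc ℚ) : RatFunc ℚ :=
  ∏ i ∈ range k, (1 - t ^ (q ^ n - q ^ i))

theorem qtbin_eq_div (q n k : ℕ) (t : RatFunc ℚ) :
    qtbin q n k t = qtProd q n k t / qtProd q k k t :=
  prod_div_distrib _ _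

theorem qtbin_zero_right (q n : ℕ) (t : RatFunc ℚ) : qtbin q n 0 t = 1 :=
  prod_range_zero _

theorem prod_range_reflect_eq_qtProd (q n k : ℕ) (t : RatFunc ℚ) :
    ∏ i ∈ range k, (1 - t ^ (q ^ n - q ^ (k - 1 - i))) = qtProd q n k t :=
  prod_range_reflect (fun i => 1 - t ^ (q ^ n - q ^ i)) k

theorem prod_one_sub_pow_shift (q a m : ℕ) {k : ℕ} (hk : k ≤ m) (t : RatFunc ℚ) :
    ∏ i ∈ range k, (1 - t ^ (q ^ (a + m) - q ^ (a + m - 1 - i))) =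
      ∏ i ∈ range k, (1 - (t ^ q ^ a) ^ (q ^ m - q ^ (m - 1 - i))) :=
  prod_congr rfl fun i hi => by
    rw [pow_pow_sub_pow, show a + m - 1 - i = a + (m - 1 - i) by rw [mem_range] at hi; omega]

theorem qtmulti_numerator_add (q a b : ℕ) (t : RatFunc ℚ) :
    ∏ i ∈ range (a + b), (1 - t ^ (q ^ (a + b) - q ^ (a + b - 1 - i))) =
      qtProd q (a + b) a t * ∏ i ∈ range b, (1 - (t ^ q ^ a) ^ (q ^ b - q ^ (b - 1 - i))) := by
  rw [← prod_one_sub_pow_shift q a b le_rfl, ← prod_range_reflect_eq_qtProd, mul_comm]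
  conv_lhs => rw [Nat.add_comm a b, prod_range_add]
  rw [Nat.add_comm b a]
  congr 1
  exact prod_congr rfl fun i _ => by rw [show a + b - 1 - (b + i) = a - 1 - i by omega]

theorem qtmulti_denominator_succ {l : ℕ} (q : ℕ) (α : Fin (l + 1) → ℕ) (t : RatFunc ℚ) :
    ∏ s, ∏ i ∈ range (α s), (1 - t ^ (q ^ sigTo α s - q ^ (sigTo α s - 1 - i))) =
      qtProd q (α 0) (α 0) t * ∏ s : Fin l, ∏ i ∈ range (Fin.tail α s),
        (1 - (t ^ q ^ α 0) ^
          (q ^ sigTo (Fin.tail α) s - q ^ (sigTo (Fin.tail α) s - 1 - i))) := by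
  rw [Fin.prod_univ_succ, sigTo_zero, prod_range_reflect_eq_qtProd]
  congr 1
  refine prod_congr rfl fun s _ => ?_
  rw [sigTo_succ]
  exact prod_one_sub_pow_shift q (α 0) _ (self_le_sigTo _ s) t

theorem qtmulti_succ {l : ℕ} (q : ℕ) (α : Fin (l + 1) → ℕ) (t : RatFunc ℚ) :
    qtmulti q α t = qtbin q (∑ s, α s) (α 0) t * qtmulti q (Fin.tail α) (t ^ q ^ α 0) := by
  have hn : ∑ s, α s = α 0 + ∑ s, Fin.tail α s := Fin.sum_univ_succ α
  rw [qtmulti, qtmulti, qtmulti_denominator_succ, hn, qtmulti_numerator_add, qtbin_eq_div,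
    div_mul_div_comm]

theorem qtmulti_of_isEmpty (q : ℕ) (α : Fin 0 → ℕ) (t : RatFunc ℚ) :
    qtmulti q α t = 1 := by
  simp [qtmulti]

section

variable {q : ℕ} {t : RatFunc ℚ}

theorem qtbin_eq_zero_of_lt {n k : ℕ} (h : n < k) (t : RatFunc ℚ) : qtbin q n k t = 0 :=
  prod_eq_zero (mem_range.2 h) (by simp)

theorem qtProd_ne_zero (hq : 1 < q) (ht : ¬IsOfFinOrder t) {n k : ℕ} (hk : k ≤ n) :
    qtProd q n k t ≠ 0 :=
  prod_ne_zero_iff.2 fun i hi => one_sub_pow_ne_zero_of_not_isOfFinOrder ht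
    (Nat.sub_ne_zero_of_lt (Nat.pow_lt_pow_right hq (by rw [mem_range] at hi; omega)))

theorem qtProd_succ_succ (q n k : ℕ) (t : RatFunc ℚ) :
    qtProd q (n + 1) (k + 1) t = (1 - t ^ (q ^ (n + 1) - 1)) * qtProd q n k (t ^ q) := by
  simp only [qtProd, prod_range_succ', pow_zero, mul_comm, pow_pow_sub_pow']

theorem qtProd_pow_eq_mul_prod_geom_sum (q n k : ℕ) (t : RatFunc ℚ) :
    qtProd q n k (t ^ q) =
      qtProd q n k t * ∏ i ∈ range k, ∑ m ∈ range q, (t ^ (q ^ n - q ^ i)) ^ m := by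
  rw [qtProd, qtProd, ← prod_mul_distrib]
  refine prod_congr rfl fun i _ => ?_
  rw [mul_neg_geom_sum, ← pow_mul, ← pow_mul, mul_comm]

theorem qtbin_succ_succ (hq : 1 < q) (ht : ¬IsOfFinOrder t) {n j : ℕ} (hjn : j ≤ n) :
    qtbin q (n + 1) (j + 1) t =
      qtbin q n j (t ^ q) + t ^ (q ^ (j + 1) - 1) * qtbin q n (j + 1) (t ^ q) *
        ∏ i ∈ range (j + 1), ∑ m ∈ range q, (t ^ (q ^ (j + 1) - q ^ i)) ^ m := by
  set G := ∏ i ∈ range (j + 1), ∑ m ∈ range q, (t ^ (q ^ (j + 1) - q ^ i)) ^ m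
  have hu : ¬IsOfFinOrder (t ^ q) := not_isOfFinOrder_pow ht (by omega)
  have hb : 1 - t ^ (q ^ (j + 1) - 1) ≠ 0 := one_sub_pow_ne_zero_of_not_isOfFinOrder ht
    (Nat.sub_ne_zero_of_lt (Nat.one_lt_pow (by omega) hq))
  have hD : qtProd q j j (t ^ q) ≠ 0 := qtProd_ne_zero hq hu le_rfl
  have hG : G ≠ 0 := right_ne_zero_of_mul <|
    qtProd_pow_eq_mul_prod_geom_sum q (j + 1) (j + 1) t ▸ qtProd_ne_zero hq hu le_rfl
  have hlast : qtProd q n (j + 1) (t ^ q) =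
      qtProd q n j (t ^ q) * (1 - t ^ (q ^ (n + 1) - q ^ (j + 1))) := by
    rw [qtProd, prod_range_succ, pow_pow_sub_pow']
    rfl
  have hsplit : 1 - t ^ (q ^ (n + 1) - 1) =
      (1 - t ^ (q ^ (j + 1) - 1)) +
        t ^ (q ^ (j + 1) - 1) * (1 - t ^ (q ^ (n + 1) - q ^ (j + 1))) := by
    have h1 : q ^ (j + 1) ≤ q ^ (n + 1) := Nat.pow_le_pow_right (by omega) (by omega)
    have h2 : 1 ≤ q ^ (j + 1) := Nat.one_le_pow _ _ (by omega)
    rw [show q ^ (n + 1) - 1 = (q ^ (j + 1) - 1) + (q ^ (n + 1) - q ^ (j + 1)) by omega, pow_add]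
    ring
  have hden : qtProd q (j + 1) (j + 1) t = (1 - t ^ (q ^ (j + 1) - 1)) * qtProd q j j (t ^ q) :=
    qtProd_succ_succ q j j t
  have hden' : qtProd q (j + 1) (j + 1) (t ^ q) =
      (1 - t ^ (q ^ (j + 1) - 1)) * qtProd q j j (t ^ q) * G := by
    rw [qtProd_pow_eq_mul_prod_geom_sum, hden]
  rw [qtbin_eq_div, qtbin_eq_div, qtbin_eq_div, hden', hden, qtProd_succ_succ, hlast, hsplit]
  field_simp

theorem qtbin_mem {S : Subsemiring (RatFunc ℚ)} (hq : 1 < q) (n k : ℕ) (htS : t ∈ S)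
    (ht : ¬IsOfFinOrder t) : qtbin q n k t ∈ S := by
  induction n generalizing k t with
  | zero =>
    rcases k with _ | k
    · rw [qtbin_zero_right]
      exact S.one_mem
    · rw [qtbin_eq_zero_of_lt k.succ_pos]
      exact S.zero_mem
  | succ n ih =>
    rcases k with _ | j
    · rw [qtbin_zero_right]
      exact S.one_mem
    rcases lt_or_ge n j with hnj | hjn
    · rw [qtbin_eq_zero_of_lt (Nat.succ_lt_succ hnj)]
      exact S.zero_mem
    have huS : t ^ q ∈ S := pow_mem htS q
    have hu : ¬IsOfFinOrder (t ^ q) := not_isOfFinOrder_pow ht (by omega)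
    rw [qtbin_succ_succ hq ht hjn]
    exact add_mem (ih j huS hu) <| mul_mem (mul_mem (pow_mem htS _) (ih (j + 1) huS hu)) <|
      prod_mem fun i _ => sum_mem fun m _ => pow_mem (pow_mem htS _) m

theorem qtmulti_mem {S : Subsemiring (RatFunc ℚ)} (hq : 1 < q) {l : ℕ} (α : Fin l → ℕ)
    (htS : t ∈ S) (ht : ¬IsOfFinOrder t) : qtmulti q α t ∈ S := by
  induction l generalizing t with
  | zero => exact qtmulti_of_isEmpty q α t ▸ S.one_mem
  | succ l ih =>
    rw [qtmulti_succ]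
    exact mul_mem (qtbin_mem hq _ _ htS ht) <|
      ih _ (pow_mem htS _) (not_isOfFinOrder_pow ht (pow_ne_zero _ (by omega)))

end

/-- For any composition `α = (α_1,…,α_ℓ)` of `n`, the (q,t)-multinomial factors as
`[n choose α]_{q,t} = [n choose α_1]_{q,t} · φ^{α_1}([n - α_1 choose (α_2,…,α_ℓ)]_{q,t})`,
where `φ` is `t ↦ t^q`; consequently for integers `q ≥ 2` it is a polynomial in `t`
with nonnegative coefficients. -/
theorem qtmulti_factorization_and_positivity (q l : ℕ) (α : Fin (l + 1) → ℕ) (hq : 2 ≤ q) :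
    qtmulti q α RatFunc.X
        = qtbin q (∑ s, α s) (α 0) RatFunc.X * qtmulti q (Fin.tail α) (RatFunc.X ^ q ^ α 0) ∧
      ∃ p : Polynomial ℚ, (∀ i, 0 ≤ p.coeff i) ∧
        algebraMap (Polynomial ℚ) (RatFunc ℚ) p = qtmulti q α RatFunc.X := by
  refine ⟨qtmulti_succ q α _, ?_⟩
  have hX : RatFunc.X ∈ (nonnegCoeffs ℚ).map (algebraMap ℚ[X] (RatFunc ℚ)) :=
    ⟨X, X_mem_nonnegCoeffs ℚ, RatFunc.algebraMap_X⟩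
  exact Subsemiring.mem_map.1 (qtmulti_mem hq α hX RatFunc.not_isOfFinOrder_X)
end
end

section
/- (MacMahon-type determinant for (q,t)-ribbon numbers) For any composition α = (α_1,...,α_ℓ) of n with partial sums σ_i, Σ_{β refined by α} (-1)^{ℓ(α)-ℓ(β)} [n choose β]_{q,t} = n!_{q,t} · det( φ^{σ_{i-1}}( 1/(σ_j - σ_{i-1})!_{q,t} ) )_{i,j=1}^{ℓ}, where entries with σ_j - σ_{i-1} < 0 are 0 and φ^m substitutes t ↦ t^{q^m}. -/
noncomputable section

/-- The (q,t)-factorial `m!_{q,t}`, as a function of `t`. -/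
def qtfact (q m : ℕ) (t : RatFunc ℚ) : RatFunc ℚ :=
  ∏ i ∈ Finset.range m, (1 - t ^ (q ^ m - q ^ i))

/-- The (q,t)-multinomial `[n choose β]_{q,t} = n!_{q,t}/β!_{q,t}` for a composition `β`. -/
def qtmultiC (q n : ℕ) (c : Composition n) (t : RatFunc ℚ) : RatFunc ℚ :=
  qtfact q n t / ∏ s : Fin c.length, qtfact q (c.blocksFun s) (t ^ q ^ c.sizeUpTo (s : ℕ))

/-!
A coarsening `β` of `α` is `α.gather δ` for a unique composition `δ` of `ℓ = ℓ(α)`, and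
`[n choose α.gather δ]_{q,t} = n!_{q,t} ∏ₖ f(τₖ, τₖ₊₁)`, where `τ` are the partial sums of `δ`
and `f(a, b) = φ^{σ_a}(1/(σ_b - σ_a)!_{q,t})`. So the left side is `n!_{q,t}` times the signed
sum of `∏ f` over all compositions of `ℓ`. The matrix is the Hessenberg matrix `(f(i, j + 1))`,
whose subdiagonal is `f(a, a) = 1`; expanding its determinant along the last column and
splitting off the last block of a composition give the same recursion.
-/

open Finset Matrix

namespace Fin

theorem val_succAbove {N : ℕ} (i : Fin (N + 1)) (j : Fin N) :
    (i.succAbove j : ℕ) = if (j : ℕ) < i then (j : ℕ) else j + 1 := by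
  split_ifs with h
  · rw [succAbove_of_castSucc_lt i j (by simpa [lt_def] using h), val_castSucc]
  · rw [succAbove_of_le_castSucc i j (by simpa [le_def] using h), val_succ]

end Fin

namespace Composition

variable {n : ℕ}

theorem boundaries_injective :
    Function.Injective (boundaries : Composition n → Finset (Fin (n + 1))) :=
  fun _ _ h => (compositionEquiv n).injective (CompositionAsSet.ext h)

theorem zero_mem_boundaries (c : Composition n) : 0 ∈ c.boundaries := by
  rw [← c.boundary_zero]
  exact mem_map_of_mem _ (mem_univ _)

theorem last_mem_boundaries (c : Composition n) : Fin.last n ∈ c.boundaries := by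
  rw [← c.boundary_last]
  exact mem_map_of_mem _ (mem_univ _)

theorem sizeUpTo_le_sizeUpTo_iff (c : Composition n) {i j : ℕ} (hi : i ≤ c.length)
    (hj : j ≤ c.length) : c.sizeUpTo i ≤ c.sizeUpTo j ↔ i ≤ j :=
  c.boundary.le_iff_le (a := ⟨i, Nat.lt_succ_of_le hi⟩) (b := ⟨j, Nat.lt_succ_of_le hj⟩)

theorem sizeUpTo_gather (c : Composition n) (d : Composition c.length) (i : ℕ) :
    (c.gather d).sizeUpTo i = c.sizeUpTo (d.sizeUpTo i) := by
  rcases lt_or_ge i d.length with hi | hi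
  · simpa using (sizeUpTo_sizeUpTo_add c d hi (d.one_le_blocksFun ⟨i, hi⟩)).symm
  · rw [sizeUpTo_ofLength_le _ i (by rwa [length_gather]), sizeUpTo_ofLength_le _ i hi,
      sizeUpTo_length]

theorem boundaries_gather (c : Composition n) (d : Composition c.length) :
    (c.gather d).boundaries = d.boundaries.map c.boundary.toEmbedding := by
  ext x
  simp [boundaries, boundary, Fin.ext_iff, Fin.exists_iff, sizeUpTo_gather, length_gather,
    sizeUpTo_le]

theorem gather_injective (c : Composition n) : Function.Injective c.gather := fun d₁ d₂ h =>
  boundaries_injective <| map_injective c.boundary.toEmbedding <| by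
    rw [← boundaries_gather, ← boundaries_gather, h]

theorem image_gather (c : Composition n) :
    univ.image c.gather = univ.filter (·.boundaries ⊆ c.boundaries) := by
  ext b
  simp only [mem_image, mem_univ, true_and, mem_filter]
  constructor
  · rintro ⟨d, rfl⟩
    rw [boundaries_gather]
    exact map_subset_map.2 (subset_univ _)
  · intro hb
    obtain ⟨u, -, hu⟩ := subset_map_iff.1 hb
    have hzero : 0 ∈ u :=
      (mem_map' c.boundary.toEmbedding).1 (c.boundary_zero ▸ hu ▸ b.zero_mem_boundaries)
    have hlast : Fin.last _ ∈ u :=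
      (mem_map' c.boundary.toEmbedding).1 (c.boundary_last ▸ hu ▸ b.last_mem_boundaries)
    refine ⟨(CompositionAsSet.mk u hzero hlast).toComposition, boundaries_injective ?_⟩
    rw [boundaries_gather, CompositionAsSet.toComposition_boundaries, hu]

def appendBlock {N : ℕ} (p : Σ i : Fin (N + 1), Composition i) : Composition (N + 1) where
  blocks := p.2.blocks ++ [N + 1 - p.1]
  blocks_pos hx := by
    rcases List.mem_append.1 hx with h | h
    · exact p.2.blocks_pos h
    · have := p.1.isLt
      simp only [List.mem_singleton] at h
      omega
  blocks_sum := by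
    have := p.1.isLt
    simp only [List.sum_append, blocks_sum, List.sum_singleton]
    omega

theorem appendBlock_bijective (N : ℕ) : Function.Bijective (@appendBlock N) := by
  constructor
  · rintro ⟨i, d⟩ ⟨j, e⟩ h
    obtain ⟨hde, hij⟩ := List.append_inj' (congrArg blocks h) rfl
    obtain rfl : i = j := by
      simp only [List.cons.injEq, and_true] at hij
      omega
    obtain rfl : d = e := Composition.ext hde
    rfl
  · intro b
    have hne : b.blocks ≠ [] := by simp [blocks_eq_nil]
    have hsplit := List.dropLast_append_getLast hne
    have hsum : b.blocks.dropLast.sum + b.blocks.getLast hne = N + 1 := by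
      simpa using congrArg List.sum hsplit
    have hlast := b.blocks_pos (List.getLast_mem hne)
    refine ⟨⟨⟨b.blocks.dropLast.sum, by omega⟩,
      ⟨b.blocks.dropLast, fun hx => b.blocks_pos (List.mem_of_mem_dropLast hx), rfl⟩⟩, ?_⟩
    ext1
    conv_rhs => rw [← hsplit]
    simp only [appendBlock]
    congr 2
    omega

theorem length_appendBlock {N : ℕ} (p : Σ i : Fin (N + 1), Composition i) :
    (appendBlock p).length = p.2.length + 1 := by
  simp [appendBlock, Composition.length]

theorem sizeUpTo_appendBlock {N : ℕ} (p : Σ i : Fin (N + 1), Composition i) {k : ℕ}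
    (hk : k ≤ p.2.length) : (appendBlock p).sizeUpTo k = p.2.sizeUpTo k := by
  simp only [sizeUpTo, appendBlock]
  rw [List.take_append_of_le_length (by rwa [p.2.blocks_length])]

end Composition

section Hessenberg

variable {K : Type*} [CommRing K]

def altCompositionSum (f : ℕ → ℕ → K) (N : ℕ) : K :=
  ∑ d : Composition N, (-1) ^ (N - d.length) *
    ∏ m ∈ range d.length, f (d.sizeUpTo m) (d.sizeUpTo (m + 1))

theorem altCompositionSum_zero (f : ℕ → ℕ → K) : altCompositionSum f 0 = 1 := by
  have hlen (d : Composition 0) : d.length = 0 := by simp [Composition.length]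
  simp [altCompositionSum, hlen, composition_card]

theorem altCompositionSum_succ (f : ℕ → ℕ → K) (N : ℕ) :
    altCompositionSum f (N + 1)
      = ∑ i : Fin (N + 1), (-1) ^ (i + N : ℕ) * f i (N + 1) * altCompositionSum f i := by
  rw [altCompositionSum, ← (Composition.appendBlock_bijective N).sum_comp, ← univ_sigma_univ,
    sum_sigma]
  refine sum_congr rfl fun i _ => ?_
  rw [altCompositionSum, mul_sum]
  refine sum_congr rfl fun d _ => ?_
  have hd : d.length ≤ i := d.length_le
  have hi : (i : ℕ) ≤ N := Nat.lt_succ_iff.mp i.isLt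
  have hprod : ∏ m ∈ range (Composition.appendBlock ⟨i, d⟩).length,
      f ((Composition.appendBlock ⟨i, d⟩).sizeUpTo m)
        ((Composition.appendBlock ⟨i, d⟩).sizeUpTo (m + 1))
      = (∏ m ∈ range d.length, f (d.sizeUpTo m) (d.sizeUpTo (m + 1))) * f i (N + 1) := by
    rw [Composition.length_appendBlock, prod_range_succ]
    congr 1
    · refine prod_congr rfl fun m hm => ?_
      rw [mem_range] at hm
      rw [Composition.sizeUpTo_appendBlock _ hm.le, Composition.sizeUpTo_appendBlock _ hm]
    · rw [Composition.sizeUpTo_appendBlock _ le_rfl, d.sizeUpTo_length,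
        ← Composition.length_appendBlock, Composition.sizeUpTo_length]
  have hsign :
      (-1 : K) ^ (N + 1 - (d.length + 1)) = (-1) ^ (i + N : ℕ) * (-1) ^ (i - d.length) := by
    rw [← pow_add]
    refine neg_one_pow_congr ?_
    simp [Nat.even_add, Nat.even_sub, hd, hd.trans hi]
  rw [hprod, Composition.length_appendBlock, hsign]
  ring

namespace Matrix

theorem det_eq_det_submatrix_castLE {N i : ℕ} (hi : i ≤ N) (A : Matrix (Fin N) (Fin N) K)
    (hlower : ∀ r c : Fin N, i ≤ (r : ℕ) → c < r → A r c = 0)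
    (hdiag : ∀ r : Fin N, i ≤ (r : ℕ) → A r r = 1) :
    A.det = (A.submatrix (Fin.castLE hi) (Fin.castLE hi)).det := by
  obtain ⟨k, rfl⟩ := Nat.exists_eq_add_of_le hi
  rw [← det_submatrix_equiv_self finSumFinEquiv, ← fromBlocks_toBlocks (A.submatrix _ _)]
  have hzero : (A.submatrix finSumFinEquiv finSumFinEquiv).toBlocks₂₁ = 0 := by
    ext r c
    refine hlower _ _ (by simp) ?_
    simp only [finSumFinEquiv_apply_left, finSumFinEquiv_apply_right, Fin.lt_def, Fin.val_castAdd,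
      Fin.val_natAdd]
    omega
  have hunit : (A.submatrix finSumFinEquiv finSumFinEquiv).toBlocks₂₂.det = 1 := by
    rw [det_of_isUpperTriangular]
    · exact prod_eq_one fun r _ => hdiag _ (by simp)
    · intro r c hcr
      refine hlower _ _ (by simp) ?_
      simp only [id, Fin.lt_def] at hcr
      simp [Fin.lt_def, hcr]
  rw [hzero, det_fromBlocks_zero₂₁, hunit, mul_one]
  rfl

def hessenberg (f : ℕ → ℕ → K) (N : ℕ) : Matrix (Fin N) (Fin N) K :=
  of fun i j => if (i : ℕ) ≤ j + 1 then f i (j + 1) else 0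

variable {f : ℕ → ℕ → K}

theorem det_hessenberg_submatrix_succAbove_castSucc (hf : ∀ a, f a a = 1) {N : ℕ}
    (i : Fin (N + 1)) :
    ((hessenberg f (N + 1)).submatrix i.succAbove Fin.castSucc).det = (hessenberg f i).det := by
  have hsucc (r : Fin N) (hr : (i : ℕ) ≤ r) : (i.succAbove r : ℕ) = r + 1 := by
    rw [Fin.val_succAbove, if_neg (by omega)]
  rw [det_eq_det_submatrix_castLE (Nat.lt_succ_iff.mp i.isLt)]
  · congr 1
    ext r c
    simp [hessenberg, Fin.val_succAbove]
  · intro r c hr hcr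
    simp only [Fin.lt_def] at hcr
    simp only [hessenberg, submatrix_apply, of_apply, hsucc r hr, Fin.val_castSucc]
    rw [if_neg (by omega)]
  · intro r hr
    simp [hessenberg, hsucc r hr, hf]

theorem det_hessenberg_succ (hf : ∀ a, f a a = 1) (N : ℕ) :
    (hessenberg f (N + 1)).det
      = ∑ i : Fin (N + 1), (-1) ^ (i + N : ℕ) * f i (N + 1) * (hessenberg f i).det := by
  rw [det_succ_column _ (Fin.last N)]
  refine sum_congr rfl fun i _ => ?_
  rw [Fin.succAbove_last, det_hessenberg_submatrix_succAbove_castSucc hf]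
  simp [hessenberg, Nat.le_succ_of_le (Nat.lt_succ_iff.mp i.isLt)]

theorem det_hessenberg (hf : ∀ a, f a a = 1) (N : ℕ) :
    (hessenberg f N).det = altCompositionSum f N := by
  induction N using Nat.strong_induction_on with
  | _ N ih =>
    cases N with
    | zero => simp [altCompositionSum_zero]
    | succ N =>
      rw [det_hessenberg_succ hf, altCompositionSum_succ]
      exact sum_congr rfl fun i _ => by rw [ih i (by omega)]

end Matrix

end Hessenberg

theorem qtmultiC_eq_mul_prod (q n : ℕ) (b : Composition n) (t : RatFunc ℚ) :
    qtmultiC q n b t = qtfact q n t * ∏ m ∈ range b.length,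
      (qtfact q (b.sizeUpTo (m + 1) - b.sizeUpTo m) (t ^ q ^ b.sizeUpTo m))⁻¹ := by
  rw [qtmultiC, div_eq_mul_inv, ← prod_inv_distrib, ← Fin.prod_univ_eq_prod_range]
  congr 2 with s
  rw [b.sizeUpTo_succ', Nat.add_sub_cancel_left]

theorem qt_ribbon_determinant_general (q n : ℕ) (c : Composition n) :
    ∑ b ∈ Finset.univ.filter (fun b : Composition n => b.boundaries ⊆ c.boundaries),
        (-1 : RatFunc ℚ) ^ (c.length - b.length) * qtmultiC q n b RatFunc.X
      = qtfact q n RatFunc.X *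
          Matrix.det (Matrix.of fun i j : Fin c.length =>
            if c.sizeUpTo (i : ℕ) ≤ c.sizeUpTo ((j : ℕ) + 1) then
              (qtfact q (c.sizeUpTo ((j : ℕ) + 1) - c.sizeUpTo (i : ℕ))
                  ((RatFunc.X : RatFunc ℚ) ^ q ^ c.sizeUpTo (i : ℕ)))⁻¹
            else 0) := by
  set f : ℕ → ℕ → RatFunc ℚ := fun a b =>
    (qtfact q (c.sizeUpTo b - c.sizeUpTo a) (RatFunc.X ^ q ^ c.sizeUpTo a))⁻¹
  have hf (a : ℕ) : f a a = 1 := by simp [f, qtfact]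
  have hmat : (Matrix.of fun i j : Fin c.length =>
      if c.sizeUpTo (i : ℕ) ≤ c.sizeUpTo ((j : ℕ) + 1) then f i (j + 1) else 0)
      = hessenberg f c.length := by
    ext i j
    simp only [hessenberg, of_apply, c.sizeUpTo_le_sizeUpTo_iff i.isLt.le j.isLt]
  rw [hmat, det_hessenberg hf, altCompositionSum, mul_sum, ← c.image_gather,
    sum_image c.gather_injective.injOn]
  refine sum_congr rfl fun d _ => ?_
  rw [qtmultiC_eq_mul_prod, Composition.length_gather]
  simp only [Composition.sizeUpTo_gather, f]
  ring

/-- (MacMahon-type determinant for (q,t)-ribbon numbers) For a composition `α` of `n` with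
partial sums `σ_i`, `Σ_{β refined by α} (-1)^{ℓ(α)-ℓ(β)} [n choose β]_{q,t}
 = n!_{q,t} · det(φ^{σ_{i-1}}(1/(σ_j - σ_{i-1})!_{q,t}))`, where entries with
`σ_j - σ_{i-1} < 0` are `0` and `φ^m` substitutes `t ↦ t^{q^m}`. -/
theorem qt_ribbon_determinant (q n : ℕ) (c : Composition n) (hq : 2 ≤ q) :
    ∑ b ∈ Finset.univ.filter (fun b : Composition n => b.boundaries ⊆ c.boundaries),
        (-1 : RatFunc ℚ) ^ (c.length - b.length) * qtmultiC q n b RatFunc.X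
      = qtfact q n RatFunc.X *
          Matrix.det (Matrix.of fun i j : Fin c.length =>
            if c.sizeUpTo (i : ℕ) ≤ c.sizeUpTo ((j : ℕ) + 1) then
              (qtfact q (c.sizeUpTo ((j : ℕ) + 1) - c.sizeUpTo (i : ℕ))
                  ((RatFunc.X : RatFunc ℚ) ^ q ^ c.sizeUpTo (i : ℕ)))⁻¹
            else 0) :=
  qt_ribbon_determinant_general q n c
end
end
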